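/- arXiv:2303.03861 — 2 statements merged into one kernel-verified Lean document; each statement's English description precedes it below -/
import Mathlib

section
/- Let X be a set, Y a nonempty subset of X, and S(Y) a subsemigroup of T(Y) with I_Y ∈ S(Y). Then T_{S(Y)}(X) is a unit-regular semigroup if and only if either (i) S(Y) is a subgroup of Sym(Y) and X \ Y is finite, or (ii) S(Y) is unit-regular and Y = X. -/
open Set Function

/-- `S` is a subsemigroup of the full transformation semigroup on `A`
(closed under composition; composition order is irrelevant here since we
quantify over all ordered pairs). -/
def IsSubsemigroupOn {A : Type*} (S : Set (A → A)) : Prop :=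
  ∀ a ∈ S, ∀ b ∈ S, a ∘ b ∈ S

/-- `S` is a subgroup of `Sym(A)`. -/
def IsSubgroupOfSym {A : Type*} (S : Set (A → A)) : Prop :=
  IsSubsemigroupOn S ∧ (∀ a ∈ S, Function.Bijective a) ∧ (id ∈ S) ∧
    ∀ a ∈ S, ∃ b ∈ S, a ∘ b = id ∧ b ∘ a = id

/-- `S` is a regular semigroup of transformations: every `a ∈ S` has `b ∈ S`
with `aba = a` (composed left to right, i.e. `x ↦ a (b (a x))`). -/
def IsRegularOn {A : Type*} (S : Set (A → A)) : Prop :=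
  ∀ a ∈ S, ∃ b ∈ S, a ∘ b ∘ a = a

/-- `S` is an inverse semigroup of transformations. -/
def IsInverseOn {A : Type*} (S : Set (A → A)) : Prop :=
  ∀ a ∈ S, ∃! b, b ∈ S ∧ a ∘ b ∘ a = a ∧ b ∘ a ∘ b = b

/-- `u` is a unit of the transformation monoid `S`. -/
def IsUnitOn {A : Type*} (S : Set (A → A)) (u : A → A) : Prop :=
  u ∈ S ∧ ∃ v ∈ S, u ∘ v = id ∧ v ∘ u = id

/-- `a` is a unit-regular element of `S`. -/
def UnitRegularElem {A : Type*} (S : Set (A → A)) (a : A → A) : Prop :=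
  ∃ u, IsUnitOn S u ∧ a ∘ u ∘ a = a

/-- `S` is a unit-regular transformation monoid. -/
def IsUnitRegularOn {A : Type*} (S : Set (A → A)) : Prop :=
  ∀ a ∈ S, UnitRegularElem S a

/-- `T` is a transversal of `ker f`: it contains exactly one element of
each kernel class. -/
def IsTransversalOf {A : Type*} (f : A → A) (T : Set A) : Prop :=
  ∀ x : A, ∃! t, t ∈ T ∧ f t = f x

/-- `T'` is a transversal of the kernel of the restriction of `f` to `Y`,
viewed inside the ambient set. -/
def IsTransversalOfOn {A : Type*} (f : A → A) (Y T' : Set A) : Prop :=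
  T' ⊆ Y ∧ ∀ y ∈ Y, ∃! t, t ∈ T' ∧ f t = f y

/-- The semigroup `T_{S(Y)}(X)` of all transformations of `X` that leave `Y`
invariant and whose restriction-corestriction to `Y` lies in `S`. -/
def TSemi {X : Type*} (Y : Set X) (S : Set (Y → Y)) : Set (X → X) :=
  {f | ∃ h : MapsTo f Y Y, MapsTo.restrict f Y Y h ∈ S}


/-!
Restricting to `Y` maps units of `T_{S(Y)}(X)` to units of `S(Y)`, and every element of `S(Y)`
extends to `X`, so unit-regularity passes down to `S(Y)`. If `f u f = f` with `u` a unit, then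
every value of `f` lying in `Y` is already taken on `Y`; extending `a ∈ S(Y)` by a constant in `Y`
on `X \ Y ≠ ∅` therefore forces `a` to be surjective, and a unit-regular monoid of surjections
is a group. A unit also maps `X \ Y` into itself, so if `f` is the identity on `Y` and an
injective self-map `g` on `X \ Y`, the equation `f u f = f` makes `g` surjective: `X \ Y` is
Dedekind-finite, hence finite. Conversely, a unit for `f` is glued from a unit of `S(Y)` on `Y` and a
permutation of the finite set `X \ Y` extending a choice of preimages of `f(X) ∩ (X \ Y)`.
-/

lemma IsUnitOn.exists_perm {A : Type*} {T : Set (A → A)} {u : A → A} (hu : IsUnitOn T u) :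
    ∃ e : Equiv.Perm A, ⇑e = u ∧ ⇑e.symm ∈ T := by
  obtain ⟨-, v, hv, huv, hvu⟩ := hu
  exact ⟨⟨u, v, congrFun hvu, congrFun huv⟩, rfl, hv⟩

lemma IsUnitOn.injective {A : Type*} {T : Set (A → A)} {u : A → A} (hu : IsUnitOn T u) :
    Injective u :=
  let ⟨_, _, _, _, hvu⟩ := hu
  LeftInverse.injective (congrFun hvu)

lemma Infinite.exists_injective_not_surjective (α : Type*) [Infinite α] :
    ∃ g : α → α, Injective g ∧ ¬ Surjective g := by
  obtain ⟨e⟩ : Nonempty (Option α ≃ α) := Cardinal.eq.1 <| by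
    rw [Cardinal.mk_option, Cardinal.add_one_eq (Cardinal.infinite_iff.1 ‹_›)]
  refine ⟨e ∘ some, e.injective.comp (Option.some_injective α), fun h => ?_⟩
  obtain ⟨a, ha⟩ := h (e none)
  exact Option.some_ne_none a (e.injective ha)

section

variable {X : Type*} {Y : Set X} {S : Set (Y → Y)}

open Classical in
noncomputable def extendOn (a : Y → Y) (g : {x // x ∉ Y} → X) : X → X :=
  fun x => if h : x ∈ Y then a ⟨x, h⟩ else g ⟨x, h⟩

@[simp]
lemma extendOn_apply_of_mem (a : Y → Y) (g : {x // x ∉ Y} → X) {x : X} (hx : x ∈ Y) :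
    extendOn a g x = a ⟨x, hx⟩ := by
  simp [extendOn, hx]

@[simp]
lemma extendOn_apply_of_notMem (a : Y → Y) (g : {x // x ∉ Y} → X) {x : X} (hx : x ∉ Y) :
    extendOn a g x = g ⟨x, hx⟩ := by
  simp [extendOn, hx]

lemma mem_TSemi_of_forall_apply {f : X → X} {a : Y → Y} (ha : a ∈ S)
    (hf : ∀ y : Y, f y = a y) : f ∈ TSemi Y S :=
  ⟨fun x hx => hf ⟨x, hx⟩ ▸ (a ⟨x, hx⟩).2, by
    convert ha
    exact funext fun y => Subtype.ext ((MapsTo.val_restrict_apply _ _).trans (hf y))⟩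

lemma extendOn_mem_TSemi {a : Y → Y} (ha : a ∈ S) (g : {x // x ∉ Y} → X) :
    extendOn a g ∈ TSemi Y S :=
  mem_TSemi_of_forall_apply ha fun y => extendOn_apply_of_mem a g y.2

lemma IsUnitOn.exists_restrict {u : X → X} (hu : IsUnitOn (TSemi Y S) u) :
    ∃ u' : Y → Y, IsUnitOn S u' ∧ ∀ y : Y, u y = u' y := by
  obtain ⟨⟨hu, hu'⟩, v, ⟨hv, hv'⟩, huv, hvu⟩ := hu
  refine ⟨hu.restrict, ⟨hu', hv.restrict, hv', ?_, ?_⟩, fun _ => rfl⟩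
  · exact funext fun y => Subtype.ext (congrFun huv (y : X))
  · exact funext fun y => Subtype.ext (congrFun hvu (y : X))

lemma IsUnitOn.mapsTo_compl {u : X → X} (hu : IsUnitOn (TSemi Y S) u) : MapsTo u Yᶜ Yᶜ := by
  obtain ⟨-, v, ⟨hv, -⟩, -, hvu⟩ := hu
  intro x hx hux
  have hx' : v (u x) = x := congrFun hvu x
  exact hx (hx' ▸ hv hux)

lemma UnitRegularElem.of_TSemi {f : X → X} {a : Y → Y} (hf : UnitRegularElem (TSemi Y S) f)
    (hfa : ∀ y : Y, f y = a y) : UnitRegularElem S a := by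
  obtain ⟨u, hu, hfuf⟩ := hf
  obtain ⟨u', hu', huu'⟩ := hu.exists_restrict
  refine ⟨u', hu', funext fun y => Subtype.ext ?_⟩
  simpa [← hfa, ← huu'] using congrFun hfuf y

lemma IsUnitRegularOn.of_TSemi (h : IsUnitRegularOn (TSemi Y S)) : IsUnitRegularOn S :=
  fun a ha => (h _ (extendOn_mem_TSemi ha Subtype.val)).of_TSemi
    fun y => extendOn_apply_of_mem a _ y.2

lemma UnitRegularElem.mem_image_of_mem {f : X → X} (hf : UnitRegularElem (TSemi Y S) f)
    {x : X} (hx : f x ∈ Y) : f x ∈ f '' Y := by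
  obtain ⟨u, ⟨⟨hu, -⟩, -⟩, hfuf⟩ := hf
  exact ⟨u (f x), hu hx, congrFun hfuf x⟩

lemma surjective_of_isUnitRegularOn_TSemi {p : X} (hp : p ∉ Y) (h : IsUnitRegularOn (TSemi Y S))
    {a : Y → Y} (ha : a ∈ S) : Surjective a := by
  intro y
  have hf := extendOn_mem_TSemi ha fun _ => y
  obtain ⟨x, hx, hxy⟩ := (h _ hf).mem_image_of_mem (x := p) (by simp [hp])
  exact ⟨⟨x, hx⟩, Subtype.ext (by simpa [hp, hx] using hxy)⟩

lemma isSubgroupOfSym_of_forall_surjective (hS : IsSubsemigroupOn S) (hid : id ∈ S)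
    (hreg : IsUnitRegularOn S) (hsurj : ∀ a ∈ S, Surjective a) : IsSubgroupOfSym S := by
  have hinv : ∀ a ∈ S, ∃ b ∈ S, a ∘ b = id ∧ b ∘ a = id := by
    intro a ha
    obtain ⟨u, ⟨hu, v, -, huv, -⟩, haua⟩ := hreg a ha
    have hau : a ∘ u = id := (hsurj a ha).injective_comp_right haua
    have hav : a = v := by rw [← comp_id a, ← huv, ← comp_assoc, hau, id_comp]
    exact ⟨u, hu, hau, hav ▸ huv⟩
  refine ⟨hS, fun a ha => ?_, hid, hinv⟩
  obtain ⟨b, -, hab, hba⟩ := hinv a ha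
  exact bijective_iff_has_inverse.2 ⟨b, congrFun hba, congrFun hab⟩

lemma UnitRegularElem.surjective_of_extendOn_id {g : {x // x ∉ Y} → {x // x ∉ Y}}
    (hg : Injective g) (h : UnitRegularElem (TSemi Y S) (extendOn id (Subtype.val ∘ g))) :
    Surjective g := by
  obtain ⟨u, hu, hfuf⟩ := h
  intro c
  let w : {x // x ∉ Y} := ⟨u c, hu.mapsTo_compl c.2⟩
  have hgw : u (g w) ∉ Y := hu.mapsTo_compl (g w).2
  have hw : g ⟨u (g w), hgw⟩ = g w := by
    have := congrFun hfuf w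
    simp only [comp_apply, extendOn_apply_of_notMem _ _ w.2,
      extendOn_apply_of_notMem _ _ hgw] at this
    exact Subtype.ext this
  exact ⟨w, Subtype.ext (hu.injective (congrArg Subtype.val (hg hw)))⟩

lemma finite_compl_of_isUnitRegularOn_TSemi (hid : id ∈ S) (h : IsUnitRegularOn (TSemi Y S)) :
    Yᶜ.Finite := by
  by_contra hinf
  have : Infinite {x // x ∉ Y} := Set.infinite_coe_iff.2 hinf
  obtain ⟨g, hg, hns⟩ := Infinite.exists_injective_not_surjective {x // x ∉ Y}
  exact hns ((h _ (extendOn_mem_TSemi hid _)).surjective_of_extendOn_id hg)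

lemma unitRegularElem_TSemi_of_perm {f : X → X} (e : Equiv.Perm Y) (he : ⇑e ∈ S)
    (he' : ⇑e.symm ∈ S) (σ : Equiv.Perm {x // x ∉ Y})
    (hY : ∀ x (hx : f x ∈ Y), f (e ⟨f x, hx⟩) = f x)
    (hYc : ∀ x (hx : f x ∉ Y), f (σ ⟨f x, hx⟩) = f x) : UnitRegularElem (TSemi Y S) f := by
  classical
  have hmem {e : Equiv.Perm Y} (he : ⇑e ∈ S) (σ : Equiv.Perm {x // x ∉ Y}) :
      ⇑(e.subtypeCongr σ) ∈ TSemi Y S :=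
    mem_TSemi_of_forall_apply he (Equiv.Perm.subtypeCongr.left_apply_subtype e σ)
  refine ⟨e.subtypeCongr σ, ⟨hmem he σ, (e.subtypeCongr σ).symm, ?_, ?_, ?_⟩, ?_⟩
  · rw [Equiv.Perm.subtypeCongr.symm]
    exact hmem he' σ.symm
  · exact Equiv.self_comp_symm _
  · exact Equiv.symm_comp_self _
  · funext x
    by_cases hx : f x ∈ Y
    · simp [Equiv.Perm.subtypeCongr.left_apply _ _ hx, hY x hx]
    · simp [Equiv.Perm.subtypeCongr.right_apply _ _ hx, hYc x hx]

lemma exists_perm_compl_forall_apply {f : X → X} (hf : MapsTo f Y Y) (hfin : Yᶜ.Finite) :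
    ∃ σ : Equiv.Perm {x // x ∉ Y}, ∀ x (hx : f x ∉ Y), f (σ ⟨f x, hx⟩) = f x := by
  classical
  have : Finite {x // x ∉ Y} := hfin.to_subtype
  let Z : Set {x // x ∉ Y} := {c | ∃ x : {x // x ∉ Y}, f x = c}
  choose g hg using fun c : Z => c.2
  have hinj : Injective g := fun c d h =>
    Subtype.ext (Subtype.ext (by rw [← hg c, ← hg d, h]))
  refine ⟨(Equiv.ofInjective g hinj).extendSubtype, fun x hx => ?_⟩
  have hc : (⟨f x, hx⟩ : {x // x ∉ Y}) ∈ Z := ⟨⟨x, fun h => hx (hf h)⟩, rfl⟩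
  rw [Equiv.extendSubtype_apply_of_mem _ _ hc]
  exact hg ⟨_, hc⟩

lemma isUnitRegularOn_TSemi_of_finite_compl (hunit : ∀ a ∈ S, IsUnitOn S a)
    (hfin : Yᶜ.Finite) : IsUnitRegularOn (TSemi Y S) := by
  rintro f ⟨hf, ha⟩
  obtain ⟨e, hea, he'⟩ := (hunit _ ha).exists_perm
  obtain ⟨σ, hσ⟩ := exists_perm_compl_forall_apply hf hfin
  refine unitRegularElem_TSemi_of_perm e.symm he' (by simpa [hea]) σ (fun x hx => ?_) hσ
  have hfe : ∀ y : Y, f y = e y := fun y => by rw [hea]; rfl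
  rw [hfe, Equiv.apply_symm_apply]

end

lemma isUnitRegularOn_TSemi_univ {X : Type*} {S : Set (↥(univ : Set X) → ↥(univ : Set X))}
    (h : IsUnitRegularOn S) : IsUnitRegularOn (TSemi univ S) := by
  rintro f ⟨hf, ha⟩
  obtain ⟨u, hu, hau⟩ := h _ ha
  obtain ⟨e, rfl, he'⟩ := hu.exists_perm
  refine unitRegularElem_TSemi_of_perm e hu.1 he' (Equiv.refl _) (fun x _ => ?_)
    (fun x hx => absurd (mem_univ _) hx)
  exact congrArg Subtype.val (congrFun hau ⟨x, mem_univ x⟩)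

theorem stmt7_general {X : Type*} (Y : Set X) (S : Set (Y → Y))
    (hS : IsSubsemigroupOn S) (hid : id ∈ S) :
    IsUnitRegularOn (TSemi Y S) ↔
      ((IsSubgroupOfSym S ∧ Yᶜ.Finite) ∨ (IsUnitRegularOn S ∧ Y = Set.univ)) := by
  constructor
  · intro h
    by_cases hY : Y = univ
    · exact Or.inr ⟨h.of_TSemi, hY⟩
    obtain ⟨p, hp⟩ := nonempty_compl.2 hY
    exact Or.inl ⟨isSubgroupOfSym_of_forall_surjective hS hid h.of_TSemi
      (fun a ha => surjective_of_isUnitRegularOn_TSemi hp h ha),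
      finite_compl_of_isUnitRegularOn_TSemi hid h⟩
  · rintro (⟨hgrp, hfin⟩ | ⟨hreg, rfl⟩)
    · exact isUnitRegularOn_TSemi_of_finite_compl (fun a ha => ⟨ha, hgrp.2.2.2 a ha⟩) hfin
    · exact isUnitRegularOn_TSemi_univ hreg

theorem stmt7 {X : Type*} (Y : Set X) (S : Set (Y → Y)) (hY : Y.Nonempty)
    (hS : IsSubsemigroupOn S) (hid : id ∈ S) :
    IsUnitRegularOn (TSemi Y S) ↔
      ((IsSubgroupOfSym S ∧ Yᶜ.Finite) ∨ (IsUnitRegularOn S ∧ Y = Set.univ)) :=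
  stmt7_general Y S hS hid
end

section
/- Let V be a vector space over a field, W a subspace, and S(W) a subsemigroup of L(W) with I_W ∈ S(W). Then L_{S(W)}(V) is unit-regular if and only if either (i) S(W) is a subgroup of Aut(W) and dim(V/W) is finite, or (ii) S(W) is unit-regular and W = V. -/
open Set

/-- `S` is a subsemigroup of `L(M)` (closed under composition). -/
def LIsSubsemigroup {K M : Type*} [Field K] [AddCommGroup M] [Module K M]
    (S : Set (M →ₗ[K] M)) : Prop :=
  ∀ a ∈ S, ∀ b ∈ S, a ∘ₗ b ∈ S

/-- `S` is a subgroup of `Aut(M)`. -/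
def LIsSubgroupOfAut {K M : Type*} [Field K] [AddCommGroup M] [Module K M]
    (S : Set (M →ₗ[K] M)) : Prop :=
  LIsSubsemigroup S ∧ (∀ a ∈ S, Function.Bijective a) ∧ (LinearMap.id ∈ S) ∧
    ∀ a ∈ S, ∃ b ∈ S, a ∘ₗ b = LinearMap.id ∧ b ∘ₗ a = LinearMap.id

/-- `S` is a regular semigroup of linear maps: `∀ a ∈ S, ∃ b ∈ S, aba = a`
(composed left to right, i.e. `x ↦ a (b (a x))`). -/
def LIsRegularOn {K M : Type*} [Field K] [AddCommGroup M] [Module K M]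
    (S : Set (M →ₗ[K] M)) : Prop :=
  ∀ a ∈ S, ∃ b ∈ S, a ∘ₗ b ∘ₗ a = a

/-- `S` is an inverse semigroup of linear maps. -/
def LIsInverseOn {K M : Type*} [Field K] [AddCommGroup M] [Module K M]
    (S : Set (M →ₗ[K] M)) : Prop :=
  ∀ a ∈ S, ∃! b, b ∈ S ∧ a ∘ₗ b ∘ₗ a = a ∧ b ∘ₗ a ∘ₗ b = b

/-- `u` is a unit of the linear monoid `S`. -/
def LIsUnitOn {K M : Type*} [Field K] [AddCommGroup M] [Module K M]
    (S : Set (M →ₗ[K] M)) (u : M →ₗ[K] M) : Prop :=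
  u ∈ S ∧ ∃ v ∈ S, u ∘ₗ v = LinearMap.id ∧ v ∘ₗ u = LinearMap.id

/-- `a` is a unit-regular element of `S`. -/
def LUnitRegularElem {K M : Type*} [Field K] [AddCommGroup M] [Module K M]
    (S : Set (M →ₗ[K] M)) (a : M →ₗ[K] M) : Prop :=
  ∃ u, LIsUnitOn S u ∧ a ∘ₗ u ∘ₗ a = a

/-- `S` is a unit-regular linear monoid. -/
def LIsUnitRegularOn {K M : Type*} [Field K] [AddCommGroup M] [Module K M]
    (S : Set (M →ₗ[K] M)) : Prop :=
  ∀ a ∈ S, LUnitRegularElem S a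

/-- `G` is a subgroup contained in the semigroup `S` of linear maps. -/
def LIsSubgroupIn {K M : Type*} [Field K] [AddCommGroup M] [Module K M]
    (S G : Set (M →ₗ[K] M)) : Prop :=
  G ⊆ S ∧ (∀ a ∈ G, ∀ b ∈ G, a ∘ₗ b ∈ G) ∧
    ∃ e ∈ G, (∀ a ∈ G, a ∘ₗ e = a ∧ e ∘ₗ a = a) ∧
      ∀ a ∈ G, ∃ b ∈ G, a ∘ₗ b = e ∧ b ∘ₗ a = e

/-- `S` is a completely regular semigroup of linear maps: every element
belongs to a subgroup of `S`. -/
def LIsCompletelyRegularOn {K M : Type*} [Field K] [AddCommGroup M] [Module K M]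
    (S : Set (M →ₗ[K] M)) : Prop :=
  ∀ a ∈ S, ∃ G, LIsSubgroupIn S G ∧ a ∈ G

/-- The semigroup `L_{S(W)}(V)` of all linear self-maps of `V` that leave `W`
invariant and whose restriction to `W` lies in `S`. -/
def LSemi {K V : Type*} [Field K] [AddCommGroup V] [Module K V] (W : Submodule K V)
    (S : Set (W →ₗ[K] W)) : Set (V →ₗ[K] V) :=
  {f | ∃ h : ∀ x ∈ W, f x ∈ W, f.restrict h ∈ S}

/-!
Fix a complement `U` of `W`, so that `L_{S(W)}(V)` becomes the set of block upper triangular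
maps `[[a, c], [0, d]]` with `a ∈ S`, and such a map is a unit exactly when `a` is a unit of `S`
and `d` is invertible. Then `f u f = f` amounts to three block equations. The diagonal ones say
that `S` and `End(U)` are unit-regular, and `End(U)` is unit-regular only if `U ≅ V/W` is
finite-dimensional: an injective non-surjective `d` admits no invertible `e` with `d e d = d`.
If `U ≠ 0`, the corner equation for `d = 0` reads `a s c = c`, and letting `c : U → W` vary
shows that every `a ∈ S` is surjective, hence invertible with inverse in `S`. Conversely, in
case (i) `u = [[a⁻¹, -a⁻¹ c e], [0, e]]` with `d e d = d` works, and in case (ii) `U = 0`.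
-/

open Function

section Endomorphisms

variable {K U : Type*} [DivisionRing K] [AddCommGroup U] [Module K U]

theorem LinearMap.exists_injective_not_surjective (h : ¬ Module.Finite K U) :
    ∃ d : U →ₗ[K] U, Injective d ∧ ¬ Surjective d := by
  have : Nontrivial U := not_subsingleton_iff_nontrivial.1 fun _ => h inferInstance
  obtain ⟨u, hu⟩ := exists_ne (0 : U)
  have hrank : Module.rank K (U × U) = Module.rank K U := by
    rw [rank_prod', Cardinal.add_eq_self]
    exact not_lt.1 (mt Module.rank_lt_aleph0_iff.1 h)
  obtain ⟨e⟩ := nonempty_linearEquiv_of_rank_eq hrank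
  refine ⟨e ∘ₗ LinearMap.inl K U U, e.injective.comp LinearMap.inl_injective, fun hs => ?_⟩
  obtain ⟨x, hx⟩ := hs (e (0, u))
  exact hu (congrArg Prod.snd (e.injective hx)).symm

theorem LinearMap.exists_isUnit_comp_comp_eq [Module.Finite K U] (d : U →ₗ[K] U) :
    ∃ e : Module.End K U, IsUnit e ∧ d ∘ₗ e ∘ₗ d = d := by
  obtain ⟨N, hN⟩ := (LinearMap.ker d).exists_isCompl
  obtain ⟨R, hR⟩ := (LinearMap.range d).exists_isCompl
  let ψ : N ≃ₗ[K] LinearMap.range d :=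
    (Submodule.quotientEquivOfIsCompl _ _ hN).symm.trans d.quotKerEquivRange
  have hψ (x : N) : (ψ x : U) = d x := rfl
  have hrank : Module.finrank K R = Module.finrank K (LinearMap.ker d) := by
    have := Submodule.finrank_add_eq_of_isCompl hR
    have := LinearMap.finrank_range_add_finrank_ker d
    omega
  -- `e` inverts `d : N ≃ range d` and maps a complement of `range d` onto `ker d`.
  let e : U ≃ₗ[K] U := (Submodule.prodEquivOfIsCompl _ _ hR).symm ≪≫ₗ
    ψ.symm.prodCongr (LinearEquiv.ofFinrankEq _ _ hrank) ≪≫ₗ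
    Submodule.prodEquivOfIsCompl _ _ hN.symm
  refine ⟨e, (Module.End.isUnit_iff _).2 e.bijective, LinearMap.ext fun x => ?_⟩
  have he : e (d x) = ψ.symm ⟨d x, x, rfl⟩ := by
    simp [e, Submodule.prodEquivOfIsCompl_symm_apply_left _ _ hR ⟨d x, x, rfl⟩]
  change d (e (d x)) = d x
  rw [he, ← hψ, LinearEquiv.apply_symm_apply]

theorem Module.finite_iff_forall_exists_isUnit_comp_comp_eq :
    Module.Finite K U ↔ ∀ d : U →ₗ[K] U, ∃ e : Module.End K U, IsUnit e ∧ d ∘ₗ e ∘ₗ d = d := by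
  refine ⟨fun _ => LinearMap.exists_isUnit_comp_comp_eq, fun H => ?_⟩
  by_contra hfin
  obtain ⟨d, hinj, hsurj⟩ := LinearMap.exists_injective_not_surjective hfin
  obtain ⟨e, he, hded⟩ := H d
  have hed (x : U) : e (d x) = x := hinj (LinearMap.congr_fun hded x)
  exact hsurj fun y => ⟨e y, ((Module.End.isUnit_iff e).1 he).1 (hed (e y))⟩

end Endomorphisms

theorem exists_linearMap_apply_eq {K U M : Type*} [Field K] [AddCommGroup U] [Module K U]
    [Nontrivial U] [AddCommGroup M] [Module K M] (m : M) : ∃ (c : U →ₗ[K] M) (u : U), c u = m := by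
  obtain ⟨u, hu⟩ := exists_ne (0 : U)
  obtain ⟨φ, hφ⟩ := Module.Projective.exists_dual_eq_one K hu
  exact ⟨φ.smulRight m, u, by simp [hφ]⟩

theorem lIsSubgroupOfAut_of_surjective {K M : Type*} [Field K] [AddCommGroup M] [Module K M]
    {S : Set (M →ₗ[K] M)} (hS : LIsSubsemigroup S)
    (hid : LinearMap.id ∈ S) (hreg : LIsUnitRegularOn S) (hsurj : ∀ a ∈ S, Surjective a) :
    LIsSubgroupOfAut S := by
  have hinv (a) (ha : a ∈ S) : ∃ b ∈ S, a ∘ₗ b = LinearMap.id ∧ b ∘ₗ a = LinearMap.id := by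
    obtain ⟨s, ⟨hs, s', -, hss', -⟩, hasa⟩ := hreg a ha
    have has : a ∘ₗ s = LinearMap.id := LinearMap.ext fun y => by
      obtain ⟨x, rfl⟩ := hsurj a ha y
      exact LinearMap.congr_fun hasa x
    have ha_eq : a = s' := by
      rw [← LinearMap.comp_id a, ← hss', ← LinearMap.comp_assoc, has, LinearMap.id_comp]
    exact ⟨s, hs, has, ha_eq ▸ hss'⟩
  refine ⟨hS, fun a ha => ?_, hid, hinv⟩
  obtain ⟨b, -, hab, hba⟩ := hinv a ha
  exact bijective_iff_has_inverse.2 ⟨b, LinearMap.congr_fun hba, LinearMap.congr_fun hab⟩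

section UpperTriangular

variable {K V : Type*} [CommRing K] [AddCommGroup V] [Module K V] {W U : Submodule K V}
  (h : IsCompl W U)

/-- The endomorphism of `V = W ⊕ U` with block matrix `[[a, c], [0, d]]`. -/
noncomputable def upperTriangularEnd (a : W →ₗ[K] W) (c : U →ₗ[K] W) (d : U →ₗ[K] U) :
    V →ₗ[K] V :=
  (Submodule.prodEquivOfIsCompl W U h).conj ((a.coprod c).prod (d ∘ₗ LinearMap.snd K W U))

variable {a a' : W →ₗ[K] W} {c c' : U →ₗ[K] W} {d d' : U →ₗ[K] U}

theorem upperTriangularEnd_apply_coe (w : W) : upperTriangularEnd h a c d w = a w := by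
  simp [upperTriangularEnd]

theorem upperTriangularEnd_comp :
    upperTriangularEnd h a c d ∘ₗ upperTriangularEnd h a' c' d' =
      upperTriangularEnd h (a ∘ₗ a') (a ∘ₗ c' + c ∘ₗ d') (d ∘ₗ d') := by
  rw [upperTriangularEnd, upperTriangularEnd, ← LinearEquiv.conj_comp, upperTriangularEnd]
  congr 1
  ext <;> simp

theorem upperTriangularEnd_id :
    upperTriangularEnd h LinearMap.id 0 LinearMap.id = (LinearMap.id : V →ₗ[K] V) := by
  rw [upperTriangularEnd, ← LinearEquiv.conj_id (Submodule.prodEquivOfIsCompl W U h)]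
  congr 1
  ext <;> simp

theorem upperTriangularEnd_inj :
    upperTriangularEnd h a c d = upperTriangularEnd h a' c' d' ↔
      a = a' ∧ c = c' ∧ d = d' := by
  refine ⟨fun H => ?_, fun ⟨ha, hc, hd⟩ => ha ▸ hc ▸ hd ▸ rfl⟩
  have H := (Submodule.prodEquivOfIsCompl W U h).conj.injective H
  refine ⟨LinearMap.ext fun w => ?_, LinearMap.ext fun u => ?_, LinearMap.ext fun u => ?_⟩
  · simpa using congrArg Prod.fst (LinearMap.congr_fun H (w, 0))
  · simpa using congrArg Prod.fst (LinearMap.congr_fun H (0, u))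
  · simpa using congrArg Prod.snd (LinearMap.congr_fun H (0, u))

end UpperTriangular

section LSemi

variable {K V : Type*} [Field K] [AddCommGroup V] [Module K V] {W U : Submodule K V}
  (h : IsCompl W U) {a : W →ₗ[K] W} {c : U →ₗ[K] W} {d : U →ₗ[K] U} {S : Set (W →ₗ[K] W)}

theorem upperTriangularEnd_mem_lSemi_iff : upperTriangularEnd h a c d ∈ LSemi W S ↔ a ∈ S := by
  have hW : ∀ x ∈ W, upperTriangularEnd h a c d x ∈ W := fun x hx =>
    (upperTriangularEnd_apply_coe h ⟨x, hx⟩).symm ▸ (a ⟨x, hx⟩).2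
  have hres (hW' : ∀ x ∈ W, upperTriangularEnd h a c d x ∈ W) :
      (upperTriangularEnd h a c d).restrict hW' = a :=
    LinearMap.ext fun w => Subtype.ext (upperTriangularEnd_apply_coe h w)
  exact ⟨fun ⟨hW, hS⟩ => hres hW ▸ hS, fun ha => ⟨hW, (hres hW).symm ▸ ha⟩⟩

theorem mem_lSemi_iff_exists_upperTriangularEnd {f : V →ₗ[K] V} :
    f ∈ LSemi W S ↔ ∃ a ∈ S, ∃ c d, upperTriangularEnd h a c d = f := by
  refine ⟨fun ⟨hW, hS⟩ => ?_, ?_⟩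
  · set E := Submodule.prodEquivOfIsCompl W U h
    set F := E.symm.conj f
    refine ⟨_, hS, LinearMap.fst K W U ∘ₗ F ∘ₗ LinearMap.inr K W U,
      LinearMap.snd K W U ∘ₗ F ∘ₗ LinearMap.inr K W U, ?_⟩
    refine Eq.trans (congrArg E.conj ?_) (E.conj_conj_symm f)
    refine LinearMap.prod_ext (LinearMap.ext fun w => ?_) (LinearMap.ext fun u => ?_)
    · have hE : E (w, 0) = w := by simp [E]
      change _ = E.symm (f (E (w, 0)))
      rw [hE, show f w = ((f.restrict hW w : W) : V) from rfl,
        Submodule.prodEquivOfIsCompl_symm_apply_left]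
      simp [F, E]
    · simp [F]
  · rintro ⟨a, ha, c, d, rfl⟩
    exact (upperTriangularEnd_mem_lSemi_iff h).2 ha

theorem lIsUnitOn_upperTriangularEnd_iff :
    LIsUnitOn (LSemi W S) (upperTriangularEnd h a c d) ↔ LIsUnitOn S a ∧ IsUnit d := by
  constructor
  · rintro ⟨hmem, v, hv, huv, hvu⟩
    obtain ⟨a', ha', c', d', rfl⟩ := (mem_lSemi_iff_exists_upperTriangularEnd h).1 hv
    rw [← upperTriangularEnd_id h, upperTriangularEnd_comp, upperTriangularEnd_inj] at huv hvu
    exact ⟨⟨(upperTriangularEnd_mem_lSemi_iff h).1 hmem, a', ha', huv.1, hvu.1⟩,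
      isUnit_iff_exists.2 ⟨d', huv.2.2, hvu.2.2⟩⟩
  · rintro ⟨⟨ha, a', ha', haa', ha'a⟩, hd⟩
    obtain ⟨d', hdd', hd'd⟩ := isUnit_iff_exists.1 hd
    refine ⟨(upperTriangularEnd_mem_lSemi_iff h).2 ha,
      upperTriangularEnd h a' (-(a' ∘ₗ c ∘ₗ d')) d', (upperTriangularEnd_mem_lSemi_iff h).2 ha',
      ?_, ?_⟩ <;>
    rw [← upperTriangularEnd_id h, upperTriangularEnd_comp, upperTriangularEnd_inj]
    · refine ⟨haa', ?_, hdd'⟩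
      rw [LinearMap.comp_neg, ← LinearMap.comp_assoc, haa', LinearMap.id_comp, neg_add_cancel]
    · refine ⟨ha'a, ?_, hd'd⟩
      rw [LinearMap.neg_comp, LinearMap.comp_assoc, LinearMap.comp_assoc,
        show d' ∘ₗ d = LinearMap.id from hd'd, LinearMap.comp_id, add_neg_cancel]

theorem lIsUnitRegularOn_lSemi_iff (h : IsCompl W U) :
    LIsUnitRegularOn (LSemi W S) ↔
      ∀ a ∈ S, ∀ (c : U →ₗ[K] W) (d : U →ₗ[K] U),
        ∃ (s : W →ₗ[K] W) (cu : U →ₗ[K] W) (e : U →ₗ[K] U),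
          LIsUnitOn S s ∧ IsUnit e ∧ a ∘ₗ s ∘ₗ a = a ∧
            a ∘ₗ (s ∘ₗ c + cu ∘ₗ d) + c ∘ₗ e ∘ₗ d = c ∧ d ∘ₗ e ∘ₗ d = d := by
  have hblocks (a s : W →ₗ[K] W) (c cu : U →ₗ[K] W) (d e : U →ₗ[K] U) :
      upperTriangularEnd h a c d ∘ₗ upperTriangularEnd h s cu e ∘ₗ upperTriangularEnd h a c d =
          upperTriangularEnd h a c d ↔
        a ∘ₗ s ∘ₗ a = a ∧ a ∘ₗ (s ∘ₗ c + cu ∘ₗ d) + c ∘ₗ e ∘ₗ d = c ∧ d ∘ₗ e ∘ₗ d = d := by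
    rw [upperTriangularEnd_comp, upperTriangularEnd_comp, upperTriangularEnd_inj]
  constructor
  · intro H a ha c d
    obtain ⟨u, hu, hfuf⟩ := H _ ((upperTriangularEnd_mem_lSemi_iff h (c := c) (d := d)).2 ha)
    obtain ⟨s, -, cu, e, rfl⟩ := (mem_lSemi_iff_exists_upperTriangularEnd h).1 hu.1
    obtain ⟨hs, he⟩ := (lIsUnitOn_upperTriangularEnd_iff h).1 hu
    exact ⟨s, cu, e, hs, he, (hblocks ..).1 hfuf⟩
  · intro H f hf
    obtain ⟨a, ha, c, d, rfl⟩ := (mem_lSemi_iff_exists_upperTriangularEnd h).1 hf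
    obtain ⟨s, cu, e, hs, he, hsol⟩ := H a ha c d
    exact ⟨_, (lIsUnitOn_upperTriangularEnd_iff h).2 ⟨hs, he⟩, (hblocks ..).2 hsol⟩

end LSemi

section UnitRegularity

variable {K V : Type*} [Field K] [AddCommGroup V] [Module K V] {W : Submodule K V}
  {S : Set (W →ₗ[K] W)}

theorem LIsUnitRegularOn.of_lSemi (H : LIsUnitRegularOn (LSemi W S)) : LIsUnitRegularOn S := by
  obtain ⟨U, hU⟩ := W.exists_isCompl
  intro a ha
  obtain ⟨s, _, _, hs, -, hasa, -⟩ := (lIsUnitRegularOn_lSemi_iff hU).1 H a ha 0 LinearMap.id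
  exact ⟨s, hs, hasa⟩

theorem LIsUnitRegularOn.finite_quotient_of_lSemi (hid : LinearMap.id ∈ S)
    (H : LIsUnitRegularOn (LSemi W S)) : Module.Finite K (V ⧸ W) := by
  obtain ⟨U, hU⟩ := W.exists_isCompl
  have : Module.Finite K U := Module.finite_iff_forall_exists_isUnit_comp_comp_eq.2 fun d => by
    obtain ⟨_, _, e, -, he, -, -, hded⟩ := (lIsUnitRegularOn_lSemi_iff hU).1 H LinearMap.id hid 0 d
    exact ⟨e, he, hded⟩
  exact Module.Finite.equiv (Submodule.quotientEquivOfIsCompl W U hU).symm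

theorem LIsUnitRegularOn.surjective_of_lSemi (hW : W ≠ ⊤) (H : LIsUnitRegularOn (LSemi W S)) :
    ∀ a ∈ S, Surjective a := by
  obtain ⟨U, hU⟩ := W.exists_isCompl
  have : Nontrivial U := Submodule.nontrivial_iff_ne_bot.2 fun hU' =>
    hW (eq_top_of_isCompl_bot (hU' ▸ hU))
  intro a ha w
  obtain ⟨c, u, rfl⟩ := exists_linearMap_apply_eq (K := K) (U := U) w
  obtain ⟨s, _, _, -, -, -, hc, -⟩ := (lIsUnitRegularOn_lSemi_iff hU).1 H a ha c 0
  exact ⟨s (c u), by simpa using LinearMap.congr_fun hc u⟩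

theorem LIsSubgroupOfAut.lIsUnitRegularOn_lSemi (hG : LIsSubgroupOfAut S)
    [Module.Finite K (V ⧸ W)] : LIsUnitRegularOn (LSemi W S) := by
  obtain ⟨U, hU⟩ := W.exists_isCompl
  have := Module.Finite.equiv (Submodule.quotientEquivOfIsCompl W U hU)
  refine (lIsUnitRegularOn_lSemi_iff hU).2 fun a ha c d => ?_
  obtain ⟨a', ha', haa', ha'a⟩ := hG.2.2.2 a ha
  obtain ⟨e, he, hded⟩ := LinearMap.exists_isUnit_comp_comp_eq d
  refine ⟨a', -(a' ∘ₗ c ∘ₗ e), e, ⟨ha', a, ha, ha'a, haa'⟩, he, ?_, ?_, hded⟩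
  · rw [← LinearMap.comp_assoc, haa', LinearMap.id_comp]
  · ext x
    simp [← LinearMap.comp_apply a a', haa']

theorem LIsUnitRegularOn.lSemi_top {S : Set ((⊤ : Submodule K V) →ₗ[K] (⊤ : Submodule K V))}
    (hreg : LIsUnitRegularOn S) : LIsUnitRegularOn (LSemi ⊤ S) := by
  refine (lIsUnitRegularOn_lSemi_iff isCompl_top_bot).2 fun a ha _ _ => ?_
  obtain ⟨s, hs, hasa⟩ := hreg a ha
  exact ⟨s, 0, LinearMap.id, hs, isUnit_one, hasa, Subsingleton.elim _ _, Subsingleton.elim _ _⟩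

end UnitRegularity

theorem stmt15 {K V : Type*} [Field K] [AddCommGroup V] [Module K V]
    (W : Submodule K V) (S : Set (W →ₗ[K] W)) (hS : LIsSubsemigroup S)
    (hid : LinearMap.id ∈ S) :
    LIsUnitRegularOn (LSemi W S) ↔
      ((LIsSubgroupOfAut S ∧ Module.Finite K (V ⧸ W)) ∨
       (LIsUnitRegularOn S ∧ W = ⊤)) := by
  constructor
  · intro H
    by_cases hW : W = ⊤
    · exact Or.inr ⟨H.of_lSemi, hW⟩
    · exact Or.inl ⟨lIsSubgroupOfAut_of_surjective hS hid H.of_lSemi (H.surjective_of_lSemi hW),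
        H.finite_quotient_of_lSemi hid⟩
  · rintro (⟨hG, _⟩ | ⟨hreg, rfl⟩)
    · exact hG.lIsUnitRegularOn_lSemi
    · exact hreg.lSemi_top
end
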